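/- Let C ⊂ ℝ^d be an open cone with vertex at the origin that is invariant under translations in the direction e_d (i.e. C + t e_d = C for all t ∈ ℝ). Suppose every positive harmonic function on C vanishing continuously on ∂C is homogeneous of the same fixed degree p > 0. Then every such positive harmonic function h on C with zero boundary values satisfies h(x + a e_d) = h(x) for all x ∈ C and a ∈ ℝ, i.e. h is independent of the last coordinate. -/

import Mathlib

open Filter
open scoped Pointwise Topology

/-!
If `h` is such a function, so is its translate `h₁ = h(· + a e)`, hence both are homogeneous of
degree `p`. Comparing `h₁(λx) = λ^p h₁(x)` with `h(λ(x + (a/λ) e)) = λ^p h(x + (a/λ) e)` gives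
`h(x + a e) = h(x + (a/λ) e)` for every `λ > 0`, and letting `λ → ∞` yields `h(x + a e) = h(x)`.
Homogeneity of positive degree also forces `h(0) = 0`, which is what makes `h₁` vanish on the whole
boundary even when `x + a e` hits the vertex.
-/

def HarmOn {d : ℕ} (h : EuclideanSpace ℝ (Fin d) → ℝ)
    (s : Set (EuclideanSpace ℝ (Fin d))) : Prop :=
  ContDiffOn ℝ 2 h s ∧ ∀ x ∈ s,
    ∑ i : Fin d, fderiv ℝ (fun y => fderiv ℝ h y (EuclideanSpace.single i 1)) x
      (EuclideanSpace.single i 1) = 0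

theorem HarmOn.comp_add_const {d : ℕ} {h : EuclideanSpace ℝ (Fin d) → ℝ}
    {s t : Set (EuclideanSpace ℝ (Fin d))} (hh : HarmOn h s) (c : EuclideanSpace ℝ (Fin d))
    (hst : Set.MapsTo (· + c) t s) : HarmOn (fun y => h (y + c)) t := by
  refine ⟨hh.1.comp (contDiff_id.add contDiff_const).contDiffOn hst, fun x hx => ?_⟩
  have hsecond : ∀ i : Fin d,
      fderiv ℝ (fun y => fderiv ℝ h (y + c) (EuclideanSpace.single i 1)) x =
        fderiv ℝ (fun z => fderiv ℝ h z (EuclideanSpace.single i 1)) (x + c) := fun i =>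
    fderiv_comp_add_right (f := fun z => fderiv ℝ h z (EuclideanSpace.single i 1)) c
  simpa only [fderiv_comp_add_right (f := h) c, hsecond] using hh.2 _ (hst hx)

section Homogeneous

variable {E : Type*} [NormedAddCommGroup E] [NormedSpace ℝ E]

def IsHomogeneousOn (h : E → ℝ) (C : Set E) (p : ℝ) : Prop :=
  ∀ l : ℝ, 0 < l → ∀ x ∈ C, h (l • x) = l ^ p * h x

theorem IsHomogeneousOn.apply_zero {h : E → ℝ} {C : Set E} {p : ℝ}
    (hh : IsHomogeneousOn h C p) (hp : 0 < p) (hcone : ∀ l : ℝ, 0 < l → l • C = C)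
    (hCne : C.Nonempty) (hcont : ContinuousOn h (closure C)) : h 0 = 0 := by
  obtain ⟨y, hy⟩ := hCne
  have hray : ∀ᶠ l : ℝ in 𝓝[>] 0, l • y ∈ C := by
    filter_upwards [self_mem_nhdsWithin] with l hl
    rw [← hcone l hl]
    exact Set.smul_mem_smul_set hy
  have hray_lim : Tendsto (fun l : ℝ => l • y) (𝓝[>] 0) (𝓝 0) :=
    ((continuous_id.smul continuous_const).tendsto' (0 : ℝ) (0 : E) (zero_smul ℝ y)).mono_left
      nhdsWithin_le_nhds
  have h0_mem : (0 : E) ∈ closure C := mem_closure_of_tendsto hray_lim hray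
  have hlim_h0 : Tendsto (fun l : ℝ => h (l • y)) (𝓝[>] 0) (𝓝 (h 0)) :=
    (hcont 0 h0_mem).tendsto.comp <| tendsto_nhdsWithin_of_tendsto_nhds_of_eventually_within _
      hray_lim (hray.mono fun l hl => subset_closure hl)
  have hlim_zero : Tendsto (fun l : ℝ => h (l • y)) (𝓝[>] 0) (𝓝 0) := by
    have hpow : Tendsto (fun l : ℝ => l ^ p) (𝓝[>] 0) (𝓝 0) := by
      simpa [Real.zero_rpow hp.ne'] using
        (Real.continuousAt_rpow_const 0 p (Or.inr hp.le)).tendsto.mono_left nhdsWithin_le_nhds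
    have hrhs : Tendsto (fun l : ℝ => l ^ p * h y) (𝓝[>] 0) (𝓝 0) := by
      simpa using hpow.mul_const (h y)
    refine hrhs.congr' ?_
    filter_upwards [self_mem_nhdsWithin] with l hl
    exact (hh l hl y hy).symm
  exact tendsto_nhds_unique hlim_h0 hlim_zero

theorem IsHomogeneousOn.apply_add_smul_eq {h : E → ℝ} {C : Set E} {p : ℝ} {v x : E}
    (hh : IsHomogeneousOn h C p) {a : ℝ} (hh₁ : IsHomogeneousOn (fun y => h (y + a • v)) C p)
    (hC : ∀ t : ℝ, Set.MapsTo (· + t • v) C C) (hx : x ∈ C) (hcont : ContinuousAt h x) :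
    h (x + a • v) = h x := by
  have hscale : ∀ l : ℝ, 0 < l → h (x + a • v) = h (x + (a / l) • v) := by
    intro l hl
    have hsmul : l • (x + (a / l) • v) = l • x + a • v := by
      rw [smul_add, smul_smul, mul_div_cancel₀ a hl.ne']
    refine mul_left_cancel₀ (Real.rpow_pos_of_pos hl p).ne' ?_
    calc l ^ p * h (x + a • v) = h (l • x + a • v) := (hh₁ l hl x hx).symm
      _ = l ^ p * h (x + (a / l) • v) := by rw [← hsmul, hh l hl _ (hC _ hx)]
  have hshrink : Tendsto (fun l : ℝ => x + (a / l) • v) atTop (𝓝 x) := by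
    simpa using (((tendsto_const_nhds (x := a)).div_atTop tendsto_id).smul_const v).const_add x
  refine tendsto_nhds_unique tendsto_const_nhds ((hcont.tendsto.comp hshrink).congr' ?_)
  filter_upwards [eventually_gt_atTop (0 : ℝ)] with l hl
  exact (hscale l hl).symm

end Homogeneous

/-- If every positive harmonic function on a cylindrical cone C (invariant under
translations in the direction e_d), vanishing on ∂C, is homogeneous of the same fixed
degree p > 0, then every such function is independent of the last coordinate. -/
theorem stmt10 (d : ℕ) (C : Set (EuclideanSpace ℝ (Fin d)))
    (hCo : IsOpen C) (hCne : C.Nonempty)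
    (hcone : ∀ l : ℝ, 0 < l → l • C = C)
    (e : EuclideanSpace ℝ (Fin d))
    (hcyl : ∀ t : ℝ, (fun x => x + t • e) '' C = C)
    (p : ℝ) (hp : 0 < p)
    (hhom : ∀ h : EuclideanSpace ℝ (Fin d) → ℝ,
      HarmOn h C → (∀ x ∈ C, 0 < h x) → ContinuousOn h (closure C) →
      (∀ x ∈ frontier C \ {0}, h x = 0) →
      ∀ l : ℝ, 0 < l → ∀ x ∈ C, h (l • x) = l ^ p * h x) :
    ∀ h : EuclideanSpace ℝ (Fin d) → ℝ,
      HarmOn h C → (∀ x ∈ C, 0 < h x) → ContinuousOn h (closure C) →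
      (∀ x ∈ frontier C \ {0}, h x = 0) →
      ∀ x ∈ C, ∀ a : ℝ, h (x + a • e) = h x := by
  intro h hharm hpos hcont hbd x hx a
  have hshift : ∀ t : ℝ, Homeomorph.addRight (t • e) '' C = C := hcyl
  have hC : ∀ t : ℝ, Set.MapsTo (· + t • e) C C := fun t y hy => hshift t ▸ ⟨y, hy, rfl⟩
  have hclosure : Set.MapsTo (· + a • e) (closure C) (closure C) := fun y hy => by
    rw [← hshift a, ← Homeomorph.image_closure]; exact ⟨y, hy, rfl⟩
  have hfrontier : Set.MapsTo (· + a • e) (frontier C) (frontier C) := fun y hy => by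
    rw [← hshift a, ← Homeomorph.image_frontier]; exact ⟨y, hy, rfl⟩
  have hhomh : IsHomogeneousOn h C p := hhom h hharm hpos hcont hbd
  have h0 : h 0 = 0 := hhomh.apply_zero hp hcone hCne hcont
  have hbd' : ∀ y ∈ frontier C, h y = 0 := fun y hy => by
    by_cases hy0 : y = 0
    · rw [hy0, h0]
    · exact hbd y ⟨hy, hy0⟩
  have hhom₁ := hhom (fun y => h (y + a • e)) (hharm.comp_add_const _ (hC a))
    (fun y hy => hpos _ (hC a hy)) (hcont.comp (continuous_add_const _).continuousOn hclosure)
    (fun y hy => hbd' _ (hfrontier hy.1))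
  exact hhomh.apply_add_smul_eq hhom₁ hC hx
    (hharm.1.continuousOn.continuousAt (hCo.mem_nhds hx))
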